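/- arXiv:2004.10422 — 3 statements merged into one kernel-verified Lean document; each statement's English description precedes it below -/
import Mathlib

section
/- Let K be a field, n ≥ 3, R = K[x_1,...,x_n], and J = (x_i x_j : 1 ≤ i < j ≤ n). Let ψ : R[T_1,...,T_n] → (R/J)[t] be the K-algebra homomorphism with ψ(x_i) = x_i mod J and ψ(T_i) = (x_i^{n-1} mod J)·t. Then the kernel of ψ equals the ideal of R[T_1,...,T_n] generated by J together with the monomials T_i T_j (1 ≤ i < j ≤ n) and x_j T_i (1 ≤ i, j ≤ n, i ≠ j). -/
/-! Let `ρ : R[T] → R[t]` be the monomial map `x^a T^b ↦ x^(a + (n-1)b) t^|b|`, so that `ψ` is `ρ`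
followed by reduction mod `J`, and `p ∈ ker ψ` iff every `t`-coefficient of `ρ p` lies in `J`,
i.e. contains no pure power `x_i^N`. As `n - 1 ≠ 0`, the monomial `x_i^(m + (n-1)k) t^k` is the
image of `x_i^m T_i^k` only. Hence a kernel element has `T`-constant part in `J` and no monomial
`x_i^m T_i^k` with `k ≥ 1`, and each of its remaining monomials `x^a T^b` is a multiple of
`T_i T_j` (if `b` involves two variables) or of `x_j T_i` (if `b` is a power of `T_i` and `a`
involves some `x_j`, `j ≠ i`). -/

namespace MvPolynomial

variable {σ R : Type*} [CommRing R]

noncomputable def reesMap (e : ℕ) :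
    MvPolynomial σ (MvPolynomial σ R) →+* Polynomial (MvPolynomial σ R) :=
  eval₂Hom Polynomial.C fun i => Polynomial.C (X i ^ e) * Polynomial.X

lemma reesMap_monomial (e : ℕ) (b : σ →₀ ℕ) (r : MvPolynomial σ R) :
    reesMap e (monomial b r) =
      Polynomial.C (r * monomial (e • b) 1) * Polynomial.X ^ b.degree := by
  rw [reesMap, coe_eval₂Hom, eval₂_monomial, Finsupp.prod, ← one_pow e, ← monomial_pow,
    ← prod_X_pow_eq_monomial, Finsupp.degree_apply]
  simp only [mul_pow, Finset.prod_mul_distrib, ← map_pow, ← map_prod, Finset.prod_pow_eq_pow_sum,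
    ← Finset.prod_pow, ← pow_mul, mul_comm e, map_mul, mul_assoc]

lemma coeff_reesMap (e : ℕ) (p : MvPolynomial σ (MvPolynomial σ R)) (k : ℕ) :
    (reesMap e p).coeff k = ∑ b ∈ p.support with b.degree = k, p.coeff b * monomial (e • b) 1 := by
  conv_lhs => rw [p.as_sum]
  simp only [map_sum, reesMap_monomial, Polynomial.finsetSum_coeff, Polynomial.coeff_C_mul_X_pow,
    Finset.sum_filter, eq_comm]

lemma coeff_zero_reesMap (e : ℕ) (p : MvPolynomial σ (MvPolynomial σ R)) :
    (reesMap e p).coeff 0 = p.coeff 0 := by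
  have h : (Polynomial.evalRingHom 0).comp (reesMap e) =
      (constantCoeff : MvPolynomial σ (MvPolynomial σ R) →+* _) := by
    ext <;> simp [reesMap]
  rw [Polynomial.coeff_zero_eq_eval_zero, ← Polynomial.coe_evalRingHom, ← RingHom.comp_apply, h,
    constantCoeff_eq]

lemma eq_single_degree_of_smul_le_single {e : ℕ} (he : e ≠ 0) {b : σ →₀ ℕ} {i : σ} {N : ℕ}
    (h : e • b ≤ Finsupp.single i N) : b = Finsupp.single i b.degree := by
  have hb : b.support ⊆ {i} := by
    intro j hj
    by_contra hji
    have := h j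
    simp_all
  rw [Finsupp.support_subset_singleton.1 hb, Finsupp.degree_single]

lemma coeff_single_coeff_reesMap {e : ℕ} (he : e ≠ 0) (p : MvPolynomial σ (MvPolynomial σ R))
    (i : σ) (k m : ℕ) :
    ((reesMap e p).coeff k).coeff (Finsupp.single i (m + e * k)) =
      (p.coeff (Finsupp.single i k)).coeff (Finsupp.single i m) := by
  rw [coeff_reesMap, coeff_sum]
  simp only [coeff_mul_monomial', mul_one]
  rw [Finset.sum_eq_single (Finsupp.single i k)]
  · rw [if_pos, Finsupp.smul_single, smul_eq_mul, ← Finsupp.single_tsub, Nat.add_sub_cancel]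
    simp [Finsupp.smul_single]
  · intro b hb hne
    rw [if_neg]
    intro hle
    rw [Finset.mem_filter] at hb
    exact hne (hb.2 ▸ eq_single_degree_of_smul_le_single he hle)
  · intro hk
    have : p.coeff (Finsupp.single i k) = 0 :=
      notMem_support_iff.1 fun h => hk (Finset.mem_filter.2 ⟨h, Finsupp.degree_single _ _⟩)
    simp [this]

lemma mapRingHom_comp_reesMap (J : Ideal (MvPolynomial σ R)) (e : ℕ) :
    (Polynomial.mapRingHom (Ideal.Quotient.mk J)).comp (reesMap e) =
      eval₂Hom (Polynomial.C.comp (Ideal.Quotient.mk J))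
        fun i => Polynomial.C (Ideal.Quotient.mk J (X i ^ e)) * Polynomial.X := by
  ext <;> simp [reesMap]

variable [LinearOrder σ]

variable (σ R) in
noncomputable def completeEdgeIdeal : Ideal (MvPolynomial σ R) :=
  Ideal.span {p | ∃ i j : σ, i < j ∧ p = X i * X j}

lemma X_mul_X_mem_completeEdgeIdeal {i j : σ} (hij : i ≠ j) :
    X i * X j ∈ completeEdgeIdeal σ R := by
  rcases hij.lt_or_gt with h | h
  · exact Ideal.subset_span ⟨i, j, h, rfl⟩
  · rw [mul_comm]
    exact Ideal.subset_span ⟨j, i, h, rfl⟩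

lemma X_pow_mul_X_pow_mem_completeEdgeIdeal {i j : σ} (hij : i ≠ j) {a b : ℕ} (ha : a ≠ 0)
    (hb : b ≠ 0) : X i ^ a * X j ^ b ∈ completeEdgeIdeal σ R :=
  Ideal.mem_of_dvd _ (mul_dvd_mul (dvd_pow_self _ ha) (dvd_pow_self _ hb))
    (X_mul_X_mem_completeEdgeIdeal hij)

lemma coeff_single_eq_zero_of_mem_completeEdgeIdeal {p : MvPolynomial σ R}
    (hp : p ∈ completeEdgeIdeal σ R) (i : σ) (N : ℕ) : p.coeff (Finsupp.single i N) = 0 := by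
  have hgen : {p : MvPolynomial σ R | ∃ i j : σ, i < j ∧ p = X i * X j} =
      (fun s => monomial s 1) ''
        {s | ∃ i j : σ, i < j ∧ s = Finsupp.single i 1 + Finsupp.single j 1} := by
    ext p
    simp only [Set.mem_ofPred_eq, Set.mem_image]
    constructor
    · rintro ⟨i, j, hij, rfl⟩
      exact ⟨_, ⟨i, j, hij, rfl⟩, by simp [X, monomial_mul]⟩
    · rintro ⟨_, ⟨i, j, hij, rfl⟩, rfl⟩
      exact ⟨i, j, hij, by simp [X, monomial_mul]⟩
  rw [completeEdgeIdeal, hgen, mem_ideal_span_monomial_image] at hp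
  by_contra hN
  obtain ⟨_, ⟨j, k, hjk, rfl⟩, hle⟩ := hp _ (mem_support_iff.2 hN)
  have hj : j = i := by
    by_contra h
    simpa [hjk.ne, h] using hle j
  have hk : k = i := by
    by_contra h
    simpa [hjk.ne', h] using hle k
  exact hjk.ne (hj.trans hk.symm)

noncomputable def reesRelations (J : Ideal (MvPolynomial σ R)) :
    Ideal (MvPolynomial σ (MvPolynomial σ R)) :=
  Ideal.span (C '' (J : Set (MvPolynomial σ R)) ∪ {q | ∃ i j : σ, i < j ∧ q = X i * X j} ∪
    {q | ∃ i j : σ, i ≠ j ∧ q = C (X j) * X i})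

section reesRelations

variable {J : Ideal (MvPolynomial σ R)}

lemma C_mem_reesRelations {r : MvPolynomial σ R} (hr : r ∈ J) : C r ∈ reesRelations J :=
  Ideal.subset_span (.inl (.inl ⟨r, hr, rfl⟩))

lemma X_mul_X_mem_reesRelations {i j : σ} (hij : i ≠ j) : X i * X j ∈ reesRelations J := by
  rcases hij.lt_or_gt with h | h
  · exact Ideal.subset_span (.inl (.inr ⟨i, j, h, rfl⟩))
  · rw [mul_comm]
    exact Ideal.subset_span (.inl (.inr ⟨j, i, h, rfl⟩))

lemma C_X_mul_X_mem_reesRelations {i j : σ} (hij : i ≠ j) : C (X j) * X i ∈ reesRelations J :=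
  Ideal.subset_span (.inr ⟨i, j, hij, rfl⟩)

lemma monomial_mem_reesRelations_of_ne {i j : σ} (hij : i ≠ j) {b : σ →₀ ℕ} (hi : b i ≠ 0)
    (hj : b j ≠ 0) (r : MvPolynomial σ R) : monomial b r ∈ reesRelations J := by
  refine Ideal.mem_of_dvd _ ?_ (X_mul_X_mem_reesRelations hij)
  rw [X, X, monomial_mul, mul_one, monomial_dvd_monomial]
  refine ⟨.inr fun k => ?_, one_dvd r⟩
  rcases eq_or_ne k i with rfl | hki
  · simp [hij]
    omega
  rcases eq_or_ne k j with rfl | hkj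
  · simp [hki]
    omega
  · simp [hki.symm, hkj.symm]

lemma monomial_monomial_mem_reesRelations {i j : σ} (hij : i ≠ j) {b a : σ →₀ ℕ}
    (hb : b i ≠ 0) (ha : a j ≠ 0) (c : R) :
    monomial b (monomial a c) ∈ reesRelations J := by
  refine Ideal.mem_of_dvd _ ?_ (C_X_mul_X_mem_reesRelations hij)
  rw [C_mul_X_eq_monomial, monomial_dvd_monomial, X_dvd_monomial]
  exact ⟨.inr (Finsupp.single_le_iff.2 (Nat.one_le_iff_ne_zero.2 hb)), .inr ha⟩

lemma monomial_mem_reesRelations_of_coeff_single {i : σ} {b : σ →₀ ℕ} (hb : b i ≠ 0)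
    {r : MvPolynomial σ R} (hr : ∀ m, r.coeff (Finsupp.single i m) = 0) :
    monomial b r ∈ reesRelations J := by
  rw [r.as_sum, map_sum]
  refine Ideal.sum_mem _ fun a ha => ?_
  obtain ⟨j, hj, hji⟩ : ∃ j ∈ a.support, j ∉ ({i} : Finset σ) := by
    refine Finset.not_subset.1 fun hai => mem_support_iff.1 ha ?_
    rw [Finsupp.support_subset_singleton.1 hai, hr]
  exact monomial_monomial_mem_reesRelations (Ne.symm (Finset.notMem_singleton.1 hji)) hb
    (Finsupp.mem_support_iff.1 hj) _

lemma mem_reesRelations_of_coeff {p : MvPolynomial σ (MvPolynomial σ R)} (h0 : p.coeff 0 ∈ J)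
    (hcoeff : ∀ i k m, k ≠ 0 → (p.coeff (Finsupp.single i k)).coeff (Finsupp.single i m) = 0) :
    p ∈ reesRelations J := by
  rw [p.as_sum]
  refine Ideal.sum_mem _ fun b _ => ?_
  by_cases hb : b = 0
  · rw [hb, monomial_zero']
    exact C_mem_reesRelations h0
  obtain ⟨i, hi⟩ := Finsupp.support_nonempty_iff.2 hb
  by_cases hbi : b.support ⊆ {i}
  · rw [Finsupp.mem_support_iff] at hi
    refine monomial_mem_reesRelations_of_coeff_single hi fun m => ?_
    rw [Finsupp.support_subset_singleton.1 hbi]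
    exact hcoeff i _ m hi
  · obtain ⟨j, hj, hji⟩ := Finset.not_subset.1 hbi
    exact monomial_mem_reesRelations_of_ne (Ne.symm (Finset.notMem_singleton.1 hji))
      (Finsupp.mem_support_iff.1 hi) (Finsupp.mem_support_iff.1 hj) _

end reesRelations

lemma reesRelations_le_comap_reesMap {e : ℕ} (he : e ≠ 0) :
    reesRelations (completeEdgeIdeal σ R) ≤
      ((completeEdgeIdeal σ R).map Polynomial.C).comap (reesMap e) := by
  rw [reesRelations, Ideal.span_le]
  rintro q ((⟨r, hr, rfl⟩ | ⟨i, j, hij, rfl⟩) | ⟨i, j, hij, rfl⟩) <;>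
    simp only [SetLike.mem_coe, Ideal.mem_comap, reesMap, map_mul, eval₂Hom_C, eval₂Hom_X']
  · exact Ideal.mem_map_of_mem _ hr
  · have h := X_pow_mul_X_pow_mem_completeEdgeIdeal (R := R) hij.ne he he
    convert Ideal.mul_mem_right (Polynomial.X ^ 2) _ (Ideal.mem_map_of_mem Polynomial.C h) using 1
    simp only [map_mul]
    ring
  · have h := X_pow_mul_X_pow_mem_completeEdgeIdeal (R := R) hij.symm one_ne_zero he
    convert Ideal.mul_mem_right Polynomial.X _ (Ideal.mem_map_of_mem Polynomial.C h) using 1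
    simp only [map_mul, pow_one]
    ring

theorem ker_reesMap_completeEdgeIdeal {e : ℕ} (he : e ≠ 0) :
    RingHom.ker ((Polynomial.mapRingHom (Ideal.Quotient.mk (completeEdgeIdeal σ R))).comp
      (reesMap e)) = reesRelations (completeEdgeIdeal σ R) := by
  rw [← RingHom.comap_ker, Polynomial.ker_mapRingHom, Ideal.mk_ker]
  refine le_antisymm (fun p hp => ?_) (reesRelations_le_comap_reesMap he)
  rw [Ideal.mem_comap, Ideal.mem_map_C_iff] at hp
  refine mem_reesRelations_of_coeff (coeff_zero_reesMap e p ▸ hp 0) fun i k m _ => ?_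
  rw [← coeff_single_coeff_reesMap he]
  exact coeff_single_eq_zero_of_mem_completeEdgeIdeal (hp k) i _

end MvPolynomial

/-- Let `n ≥ 3`, `R = K[x_1,…,x_n]`, and
`J = (x_i x_j : 1 ≤ i < j ≤ n)`.  Let `ψ : R[T_1,…,T_n] → (R/J)[t]` be the algebra map
with `ψ(x_i) = x_i mod J` and `ψ(T_i) = (x_i^{n-1} mod J)·t` (here `R[T_1,…,T_n]` is
`MvPolynomial (Fin n) R`, the `T_i` are its variables `X i`, and the elements of `R` sit
inside it via `C`).  Then `ker ψ` is the ideal generated by (the image of) `J`, the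
monomials `T_i T_j` (`i < j`) and the monomials `x_j T_i` (`i ≠ j`). -/
theorem kernel_rees_presentation {K : Type} [Field K] {n : ℕ} (hn : 3 ≤ n)
    (J : Ideal (MvPolynomial (Fin n) K))
    (hJ : J = Ideal.span
      {p : MvPolynomial (Fin n) K | ∃ i j : Fin n, i < j ∧
        p = MvPolynomial.X i * MvPolynomial.X j}) :
    RingHom.ker
        (MvPolynomial.eval₂Hom
          ((Polynomial.C :
              (MvPolynomial (Fin n) K ⧸ J) →+* Polynomial (MvPolynomial (Fin n) K ⧸ J)).comp
            (Ideal.Quotient.mk J))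
          (fun i : Fin n =>
            Polynomial.C (Ideal.Quotient.mk J (MvPolynomial.X i ^ (n - 1))) * Polynomial.X)) =
      Ideal.span
        ((MvPolynomial.C '' (J : Set (MvPolynomial (Fin n) K))) ∪
          {q : MvPolynomial (Fin n) (MvPolynomial (Fin n) K) | ∃ i j : Fin n, i < j ∧
            q = MvPolynomial.X i * MvPolynomial.X j} ∪
          {q : MvPolynomial (Fin n) (MvPolynomial (Fin n) K) | ∃ i j : Fin n, i ≠ j ∧
            q = MvPolynomial.C (MvPolynomial.X j) * MvPolynomial.X i}) := by
  subst hJ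
  rw [← MvPolynomial.mapRingHom_comp_reesMap]
  exact MvPolynomial.ker_reesMap_completeEdgeIdeal (by omega)
end

section
/- Let K be a field, n ≥ 2 and d ≥ 1 integers, R = K[x_1,...,x_n], m = (x_1,...,x_n), and for each i let q_i = (x_1, ..., x_{i-1}, x_{i+1}, ..., x_n) be the ideal generated by all variables except x_i. Then m^{n(d-1)} = m^{d-1} · ( q_1^{(n-1)(d-1)} + q_2^{(n-1)(d-1)} + ... + q_n^{(n-1)(d-1)} ). -/
lemma aux_prod_mem_pow {R : Type*} [CommRing R] {α : Type*} [DecidableEq α] (I : Ideal R)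
    (s : Finset α) (f : α → R) (h : ∀ a ∈ s, f a ∈ I) : (∏ a ∈ s, f a) ∈ I ^ s.card := by
  induction s using Finset.cons_induction with
  | empty => simp
  | cons a s ha ih =>
      rw [Finset.prod_cons, Finset.card_cons, pow_succ, mul_comm]
      exact Ideal.mul_mem_mul (h a (Finset.mem_cons_self a s))
        (ih fun b hb => h b (Finset.mem_cons_of_mem hb))

lemma aux_sum_ideal_le {R : Type*} [CommRing R] {ι : Type*} (s : Finset ι)
    (f : ι → Ideal R) (I : Ideal R) (h : ∀ i ∈ s, f i ≤ I) : (∑ i ∈ s, f i) ≤ I := by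
  induction s using Finset.cons_induction with
  | empty => simp
  | cons a s ha ih =>
      rw [Finset.sum_cons]
      exact sup_le (h a (Finset.mem_cons_self a s)) (ih fun b hb => h b (Finset.mem_cons_of_mem hb))

/-- Let `n ≥ 2`, `d ≥ 1`, `R = K[x_1,…,x_n]`, `m = (x_1,…,x_n)` and,
for each `i`, `q_i = (x_1, …, x_{i-1}, x_{i+1}, …, x_n)` the ideal generated by all the
variables except `x_i`.  Then
`m^{n(d-1)} = m^{d-1} · (q_1^{(n-1)(d-1)} + ⋯ + q_n^{(n-1)(d-1)})`. -/
theorem power_maximal_ideal_decomposition {K : Type} [Field K] {n : ℕ} (hn : 2 ≤ n)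
    (d : ℕ) (hd : 1 ≤ d) :
    (Ideal.span (Set.range (MvPolynomial.X : Fin n → MvPolynomial (Fin n) K))) ^ (n * (d - 1)) =
      (Ideal.span (Set.range (MvPolynomial.X : Fin n → MvPolynomial (Fin n) K))) ^ (d - 1) *
        ∑ i : Fin n,
          (Ideal.span {p : MvPolynomial (Fin n) K | ∃ j : Fin n, j ≠ i ∧
            p = MvPolynomial.X j}) ^ ((n - 1) * (d - 1)) := by
  classical
  set e := d - 1 with he
  set N := (n - 1) * e with hN
  set m : Ideal (MvPolynomial (Fin n) K) :=
    Ideal.span (Set.range (MvPolynomial.X : Fin n → MvPolynomial (Fin n) K)) with hm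
  set Q : Fin n → Ideal (MvPolynomial (Fin n) K) := fun i =>
    Ideal.span {p : MvPolynomial (Fin n) K | ∃ j : Fin n, j ≠ i ∧ p = MvPolynomial.X j} with hQ
  have harith : n * e = N + e := by
    have h1 : n - 1 + 1 = n := by omega
    calc n * e = (n - 1 + 1) * e := by rw [h1]
    _ = N + e := by rw [add_mul, one_mul]
  have hQm : ∀ i, Q i ≤ m := by
    intro i
    rw [hQ, hm, Ideal.span_le]
    rintro p ⟨j, -, rfl⟩
    exact Ideal.subset_span ⟨j, rfl⟩
  apply le_antisymm
  · -- hard direction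
    show Ideal.span _ ^ (n * e) ≤ _
    rw [Ideal.span, Submodule.span_pow, Submodule.span_le]
    intro p hp
    rw [Set.mem_pow] at hp
    obtain ⟨f, rfl⟩ := hp
    choose g hg using fun k => (f k).2
    have hprod : (List.ofFn fun i => ((f i : MvPolynomial (Fin n) K))).prod
        = ∏ k : Fin (n * e), MvPolynomial.X (g k) := by
      rw [List.prod_ofFn]
      exact Finset.prod_congr rfl fun k _ => (hg k).symm
    rw [hprod]
    -- pigeonhole
    have hpig : ∃ i : Fin n, (Finset.univ.filter fun k => g k = i).card ≤ e := by
      by_contra hcon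
      push_neg at hcon
      have hsum : ∑ i : Fin n, (Finset.univ.filter fun k => g k = i).card
          = (Finset.univ : Finset (Fin (n * e))).card :=
        (Finset.card_eq_sum_card_fiberwise fun x _ => Finset.mem_univ (g x)).symm
      have hge : ∑ i : Fin n, (e + 1) ≤ ∑ i : Fin n, (Finset.univ.filter fun k => g k = i).card :=
        Finset.sum_le_sum fun i _ => hcon i
      simp only [Finset.sum_const, Finset.card_univ, Fintype.card_fin, smul_eq_mul, hsum] at hge
      nlinarith [hge]
    obtain ⟨i, hi⟩ := hpig
    set T : Finset (Fin (n * e)) := Finset.univ.filter fun k => g k = i with hT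
    have hTc : N ≤ Tᶜ.card := by
      rw [Finset.card_compl, Fintype.card_fin]
      omega
    obtain ⟨U, hUsub, hUcard⟩ := Finset.exists_subset_card_eq hTc
    have hsplit : (∏ k : Fin (n * e), MvPolynomial.X (g k))
        = (∏ k ∈ Uᶜ, (MvPolynomial.X (g k) : MvPolynomial (Fin n) K)) *
          ∏ k ∈ U, (MvPolynomial.X (g k) : MvPolynomial (Fin n) K) := by
      exact (Finset.prod_mul_prod_compl U _).symm.trans (mul_comm _ _)
    rw [hsplit]
    have hA : (∏ k ∈ U, (MvPolynomial.X (g k) : MvPolynomial (Fin n) K)) ∈ Q i ^ N := by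
      have := aux_prod_mem_pow (Q i) U (fun k => MvPolynomial.X (g k)) ?_
      · rwa [hUcard] at this
      · intro k hk
        have hki : g k ≠ i := by
          have := hUsub hk
          simp only [hT, Finset.mem_compl, Finset.mem_filter, Finset.mem_univ, true_and] at this
          exact this
        exact Ideal.subset_span ⟨g k, hki, rfl⟩
    have hB : (∏ k ∈ Uᶜ, (MvPolynomial.X (g k) : MvPolynomial (Fin n) K)) ∈ m ^ e := by
      have hcard : Uᶜ.card = e := by
        rw [Finset.card_compl, Fintype.card_fin, hUcard]
        omega
      have := aux_prod_mem_pow m Uᶜ (fun k => MvPolynomial.X (g k))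
        (fun k _ => Ideal.subset_span ⟨g k, rfl⟩)
      rwa [hcard] at this
    exact Ideal.mul_mem_mul hB
      ((Finset.single_le_sum (f := fun j => Q j ^ N) (fun j _ => bot_le) (Finset.mem_univ i)) hA)
  · -- easy direction
    have h1 : (∑ i : Fin n, Q i ^ N) ≤ m ^ N :=
      aux_sum_ideal_le _ _ _ fun i _ => Ideal.pow_right_mono (hQm i) N
    calc m ^ e * ∑ i : Fin n, Q i ^ N ≤ m ^ e * m ^ N := Ideal.mul_mono le_rfl h1
    _ = m ^ (n * e) := by rw [← pow_add, harith, Nat.add_comm]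
end

section
/- Let K be a field of characteristic zero, n ≥ 1 and d ≥ 1 integers, R = K[x_1,...,x_n], m = (x_1,...,x_n), and let Θ be the Jacobian matrix of the minimal monomial generators of m^d (i.e., of all monomials of degree d in x_1,...,x_n). Then the ideal I_n(Θ) of n×n minors of Θ equals m^{n(d-1)}. -/
open MvPolynomial Finset Pointwise

/-- degree of exponent vector as a finite sum -/
lemma deg_eq {n : ℕ} (u : Fin n →₀ ℕ) : (u.sum fun _ e => e) = ∑ j : Fin n, u j :=
  Finsupp.sum_fintype _ _ (fun _ => rfl)

lemma prod_monomial {ι σ R : Type*} [CommSemiring R] (s : Finset ι) (e : ι → (σ →₀ ℕ))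
    (b : ι → R) :
    ∏ i ∈ s, monomial (e i) (b i) = monomial (∑ i ∈ s, e i) (∏ i ∈ s, b i) := by
  induction s using Finset.cons_induction with
  | empty => simp [MvPolynomial.monomial_zero']
  | cons i s hi ih =>
      rw [Finset.prod_cons, ih, Finset.prod_cons, Finset.sum_cons, MvPolynomial.monomial_mul]

lemma monomial_mem_pow {K : Type} [CommRing K] {n : ℕ} (c : Fin n →₀ ℕ) (r : K) :
    monomial c r ∈ (Ideal.span (Set.range (X : Fin n → MvPolynomial (Fin n) K)))
      ^ (c.sum fun _ e => e) := by
  rw [MvPolynomial.monomial_eq]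
  apply Ideal.mul_mem_left
  rw [Finsupp.prod, Finsupp.sum, ← Finset.prod_pow_eq_pow_sum]
  exact Ideal.prod_mem_prod fun i _ =>
    Ideal.pow_mem_pow (Ideal.subset_span (Set.mem_range_self i)) _

lemma pderiv_monomial_mem {K : Type} [CommRing K] {n d : ℕ} (j : Fin n) (a : Fin n →₀ ℕ)
    (ha : (a.sum fun _ e => e) = d) :
    pderiv j (monomial a (1 : K)) ∈
      (Ideal.span (Set.range (X : Fin n → MvPolynomial (Fin n) K))) ^ (d - 1) := by
  rw [MvPolynomial.pderiv_monomial, one_mul]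
  rcases Nat.eq_zero_or_pos (a j) with h | h
  · simp [h]
  · have hle : Finsupp.single j 1 ≤ a := by
      rwa [Finsupp.single_le_iff]
    have hdeg : ((a - Finsupp.single j 1).sum fun _ e => e) = d - 1 := by
      rw [deg_eq] at ha ⊢
      have h2 : ∀ i : Fin n, (a - Finsupp.single j 1 : Fin n →₀ ℕ) i = a i - Finsupp.single j 1 i :=
        fun i => Finsupp.tsub_apply a _ i
      rw [Finset.sum_congr rfl (fun i _ => h2 i),
        Finset.sum_tsub_distrib _ (fun i _ => Finsupp.le_def.mp hle i), ha]
      congr 1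
      simp [Finsupp.single_apply, Finset.sum_ite_eq']
    rw [← hdeg]
    exact monomial_mem_pow _ _

/-- The ideal `I_r(M)` generated by all `r × r` minors of a matrix `M`. -/
noncomputable def minorsIdeal {R : Type} [CommRing R] {ι κ : Type} (r : ℕ)
    (M : Matrix ι κ R) : Ideal R :=
  Ideal.span {p | ∃ (ρ : Fin r → ι) (γ : Fin r → κ),
    Function.Injective ρ ∧ Function.Injective γ ∧ p = (M.submatrix ρ γ).det}

lemma minors_le {K : Type} [Field K] {n : ℕ} (d : ℕ) :
    minorsIdeal n (Matrix.of fun (a : {a : Fin n →₀ ℕ // (a.sum fun _ e => e) = d}) (j : Fin n) =>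
          pderiv j (monomial a.1 (1 : K))) ≤
    (Ideal.span (Set.range (X : Fin n → MvPolynomial (Fin n) K))) ^ (n * (d - 1)) := by
  rw [minorsIdeal, Ideal.span_le]
  rintro p ⟨ρ, γ, hρ, hγ, rfl⟩
  simp only [SetLike.mem_coe]
  rw [Matrix.det_apply]
  refine Submodule.sum_mem _ fun σ _ => ?_
  rw [Units.smul_def]
  refine zsmul_mem ?_ _
  have hmem : ∀ i : Fin n,
      (Matrix.of fun (a : {a : Fin n →₀ ℕ // (a.sum fun _ e => e) = d}) (j : Fin n) =>
        pderiv j (monomial a.1 (1 : K))).submatrix ρ γ (σ i) i ∈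
      (Ideal.span (Set.range (X : Fin n → MvPolynomial (Fin n) K))) ^ (d - 1) := by
    intro i
    exact pderiv_monomial_mem _ _ (ρ (σ i)).2
  have h1 := Ideal.prod_mem_prod (s := (Finset.univ : Finset (Fin n)))
    (I := fun _ => (Ideal.span (Set.range (X : Fin n → MvPolynomial (Fin n) K))) ^ (d - 1))
    (fun i _ => hmem i)
  rw [Finset.prod_const, Finset.card_univ, Fintype.card_fin, ← pow_mul, mul_comm] at h1
  exact h1

section Combinatorics


/-- partial sums -/
def Ssum (w : ℕ → ℕ) (j : ℕ) : ℕ := ∑ t ∈ Finset.range j, w t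

/-- the greedy block decomposition matrix -/
def fmat (e : ℕ) (w : ℕ → ℕ) (i j : ℕ) : ℕ :=
  min ((i + 1) * e) (Ssum w (j + 1)) - max (i * e) (Ssum w j)

variable {e n : ℕ} {w : ℕ → ℕ}

lemma Ssum_mono : Monotone (Ssum w) := fun a b hab =>
  Finset.sum_le_sum_of_subset (Finset.range_subset_range.mpr hab)

lemma Ssum_succ (j : ℕ) : Ssum w (j + 1) = Ssum w j + w j := Finset.sum_range_succ w j

lemma fmat_row (hi : i < n) (hSn : Ssum w n = n * e) :
    ∑ j ∈ range n, fmat e w i j = e := by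
  have hg : Monotone (fun x => min (max (Ssum w x) (i * e)) ((i + 1) * e)) := by
    intro a b hab
    have := Ssum_mono (w := w) hab
    dsimp only
    omega
  have hterm : ∀ j, fmat e w i j =
      (fun x => min (max (Ssum w x) (i * e)) ((i + 1) * e)) (j + 1) -
      (fun x => min (max (Ssum w x) (i * e)) ((i + 1) * e)) j := by
    intro j
    have := Ssum_mono (w := w) (Nat.le_succ j)
    simp only [fmat]
    omega
  rw [Finset.sum_congr rfl (fun j _ => hterm j), Finset.sum_range_tsub hg]
  have h0 : Ssum w 0 = 0 := rfl
  have h1 : i * e ≤ (i + 1) * e := Nat.mul_le_mul_right _ (Nat.le_succ i)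
  have h2 : (i + 1) * e ≤ n * e := Nat.mul_le_mul_right _ (by omega)
  have h3 : (i + 1) * e = i * e + e := by ring
  omega

lemma fmat_col (hj : j < n) (hSn : Ssum w n = n * e) :
    ∑ i ∈ range n, fmat e w i j = w j := by
  have hg : Monotone (fun x => min (max (x * e) (Ssum w j)) (Ssum w (j + 1))) := by
    intro a b hab
    have : a * e ≤ b * e := Nat.mul_le_mul_right _ hab
    dsimp only
    omega
  have hterm : ∀ i, fmat e w i j =
      (fun x => min (max (x * e) (Ssum w j)) (Ssum w (j + 1))) (i + 1) -
      (fun x => min (max (x * e) (Ssum w j)) (Ssum w (j + 1))) i := by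
    intro i
    have : i * e ≤ (i + 1) * e := Nat.mul_le_mul_right _ (Nat.le_succ i)
    simp only [fmat]
    omega
  rw [Finset.sum_congr rfl (fun i _ => hterm i), Finset.sum_range_tsub hg]
  have h0 : Ssum w j ≤ Ssum w (j + 1) := Ssum_mono (Nat.le_succ j)
  have h1 : Ssum w (j + 1) ≤ n * e := hSn ▸ Ssum_mono hj
  have h2 := Ssum_succ (w := w) j
  omega

/-- Chebyshev-type bound: partial sums of a monotone sequence grow at most linearly. -/
lemma Ssum_le (hw : ∀ s t, s ≤ t → t < n → w s ≤ w t) (hSn : Ssum w n = n * e)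
    (hn : 0 < n) (hm : m ≤ n) : Ssum w m ≤ m * e := by
  have key : (n - m) * Ssum w m ≤ m * (Ssum w n - Ssum w m) := by
    have hsplit : Ssum w n - Ssum w m = ∑ t ∈ Finset.Ico m n, w t := by
      have : Ssum w m + ∑ t ∈ Finset.Ico m n, w t = Ssum w n := by
        rw [Ssum, Ssum, ← Finset.sum_range_add_sum_Ico w hm]
      omega
    rw [hsplit]
    calc (n - m) * Ssum w m = ∑ t ∈ range m, (n - m) * w t := by
          rw [Ssum, Finset.mul_sum]
      _ ≤ ∑ t ∈ range m, ∑ u ∈ Finset.Ico m n, w u := by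
          refine Finset.sum_le_sum fun t ht => ?_
          have : (n - m) * w t = ∑ u ∈ Finset.Ico m n, w t := by
            rw [Finset.sum_const, Nat.card_Ico, smul_eq_mul, mul_comm]
          rw [this]
          refine Finset.sum_le_sum fun u hu => ?_
          simp only [Finset.mem_Ico] at hu
          exact hw t u (le_trans (le_of_lt (Finset.mem_range.mp ht)) hu.1) hu.2
      _ = m * ∑ u ∈ Finset.Ico m n, w u := by
          rw [Finset.sum_const, Finset.card_range, smul_eq_mul]
  have hSm : Ssum w m ≤ Ssum w n := Ssum_mono hm
  have key2 : n * Ssum w m ≤ m * Ssum w n := by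
    have e1 : n * Ssum w m = (n - m) * Ssum w m + m * Ssum w m := by
      rw [← Nat.add_mul]
      congr 1
      omega
    have e2 : m * (Ssum w n - Ssum w m) + m * Ssum w m = m * Ssum w n := by
      rw [← Nat.mul_add]
      congr 1
      omega
    omega
  rw [hSn] at key2
  have : m * (n * e) = n * (m * e) := by ring
  rw [this] at key2
  exact Nat.le_of_mul_le_mul_left key2 hn

lemma fmat_tri (hij : j < i) (hin : i ≤ n) (hSn : Ssum w n = n * e)
    (hw : ∀ s t, s ≤ t → t < n → w s ≤ w t) (hn : 0 < n) :
    fmat e w i j = 0 := by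
  have h1 : Ssum w (j + 1) ≤ (j + 1) * e := Ssum_le hw hSn hn (by omega)
  have h2 : (j + 1) * e ≤ i * e := Nat.mul_le_mul_right _ (by omega)
  simp only [fmat]
  omega

end Combinatorics

lemma monomial_mem_minors {K : Type} [Field K] [CharZero K] {n d : ℕ} (hn : 1 ≤ n) (hd : 1 ≤ d)
    (c : Fin n →₀ ℕ) (hc : (c.sum fun _ e => e) = n * (d - 1)) :
    monomial c (1 : K) ∈ minorsIdeal n
      (Matrix.of fun (a : {a : Fin n →₀ ℕ // (a.sum fun _ e => e) = d}) (j : Fin n) =>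
        pderiv j (monomial a.1 (1 : K))) := by
  set e := d - 1 with he
  set τ : Equiv.Perm (Fin n) := Tuple.sort (fun j => c j) with hτdef
  set w : ℕ → ℕ := fun t => if h : t < n then c (τ ⟨t, h⟩) else 0 with hwdef
  have hwmono : ∀ s t, s ≤ t → t < n → w s ≤ w t := by
    intro s t hst htn
    have hsn : s < n := lt_of_le_of_lt hst htn
    simp only [hwdef, dif_pos hsn, dif_pos htn]
    exact Tuple.monotone_sort (fun j => c j) (show (⟨s, hsn⟩ : Fin n) ≤ ⟨t, htn⟩ from hst)
  have hwfin : ∀ j : Fin n, w ↑j = c (τ j) := by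
    intro j
    simp only [hwdef, dif_pos j.isLt]
  have hSn : Ssum w n = n * e := by
    rw [Ssum, ← Fin.sum_univ_eq_sum_range]
    rw [Finset.sum_congr rfl (fun j _ => hwfin j)]
    rw [Equiv.sum_comp τ (fun m => c m), ← deg_eq, hc]
  -- the exponent vectors
  set cv : Fin n → (Fin n →₀ ℕ) :=
    fun i => Finsupp.equivFunOnFinite.symm fun m => fmat e w ↑i ↑(τ.symm m) with hcvdef
  set a : Fin n → (Fin n →₀ ℕ) := fun i => cv i + Finsupp.single (τ i) 1 with hadef
  have hcv : ∀ i j : Fin n, cv i (τ j) = fmat e w ↑i ↑j := by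
    intro i j
    simp [hcvdef]
  have ha : ∀ i j : Fin n, a i (τ j) = fmat e w ↑i ↑j + if j = i then 1 else 0 := by
    intro i j
    simp only [hadef, Finsupp.add_apply, hcv, Finsupp.single_apply]
    congr 1
    rw [if_congr (by rw [EmbeddingLike.apply_eq_iff_eq, eq_comm]) rfl rfl]
  have hadeg : ∀ i, ((a i).sum fun _ e => e) = d := by
    intro i
    rw [deg_eq, ← Equiv.sum_comp τ (fun m => a i m)]
    rw [Finset.sum_congr rfl (fun j _ => ha i j), Finset.sum_add_distrib,
      Fin.sum_univ_eq_sum_range (fun j => fmat e w ↑i j) n, fmat_row i.isLt hSn,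
      Finset.sum_ite_eq' Finset.univ i (fun _ => 1)]
    simp only [Finset.mem_univ, if_true]
    omega
  have hasum : ∑ i : Fin n, a i = c + ∑ i : Fin n, Finsupp.single i 1 := by
    ext m
    rw [Finsupp.finset_sum_apply, Finsupp.add_apply, Finsupp.finset_sum_apply]
    have hm : m = τ (τ.symm m) := (Equiv.apply_symm_apply τ m).symm
    rw [hm]
    rw [Finset.sum_congr rfl (fun i _ => ha i (τ.symm m)), Finset.sum_add_distrib,
      Fin.sum_univ_eq_sum_range (fun i => fmat e w i ↑(τ.symm m)) n,
      fmat_col (τ.symm m).isLt hSn, hwfin]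
    congr 1
    rw [Finset.sum_ite_eq Finset.univ (τ.symm m) (fun _ => 1)]
    simp only [Finset.mem_univ, if_true]
    rw [Finset.sum_congr rfl (fun i _ => Finsupp.single_apply)]
    rw [Finset.sum_ite_eq' Finset.univ (τ (τ.symm m)) (fun _ => 1)]
    simp
  -- the integer matrix and its determinant
  set Nz : Matrix (Fin n) (Fin n) ℤ := Matrix.of fun i j => (a i (τ j) : ℤ) with hNzdef
  have htri : Nz.BlockTriangular id := by
    intro i j hij
    have h1 : fmat e w ↑i ↑j = 0 :=
      fmat_tri hij (le_of_lt i.isLt) hSn hwmono (by omega)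
    have h2 : (j : Fin n) ≠ i := fun h => absurd (h ▸ hij) (lt_irrefl _)
    simp only [hNzdef, Matrix.of_apply, ha i j, h1, if_neg h2]
    norm_num
  have hdiag : ∀ i : Fin n, Nz i i = (fmat e w ↑i ↑i : ℤ) + 1 := by
    intro i
    simp [hNzdef, ha i i]
  have hdetz : Nz.det ≠ 0 := by
    rw [Matrix.det_of_upperTriangular htri]
    refine Finset.prod_ne_zero_iff.mpr fun i _ => ?_
    rw [hdiag i]
    positivity
  set NK : Matrix (Fin n) (Fin n) K := Matrix.of fun i j => (a i (τ j) : K) with hNKdef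
  have hNK : NK = Nz.map (Int.cast : ℤ → K) := by
    ext i j
    simp [hNKdef, hNzdef]
  have hdetNK : NK.det = ((Nz.det : ℤ) : K) := by
    rw [hNK]
    exact (RingHom.map_det (Int.castRingHom K) Nz).symm
  have hdetNK_ne : NK.det ≠ 0 := by
    rw [hdetNK]
    exact_mod_cast hdetz
  -- the minor
  set ρ : Fin n → {a : Fin n →₀ ℕ // (a.sum fun _ e => e) = d} :=
    fun i => ⟨a i, hadeg i⟩ with hρdef
  have hinjρ : Function.Injective ρ := by
    intro i i' hii
    by_contra hne
    apply hdetz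
    refine Matrix.det_zero_of_row_eq hne ?_
    funext j
    have : a i = a i' := congrArg Subtype.val hii
    simp [hNzdef, this]
  -- the minor matrix over the polynomial ring
  set Θ : Matrix {a : Fin n →₀ ℕ // (a.sum fun _ e => e) = d} (Fin n) (MvPolynomial (Fin n) K) :=
    Matrix.of fun (a : {a : Fin n →₀ ℕ // (a.sum fun _ e => e) = d}) (j : Fin n) =>
      pderiv j (monomial a.1 (1 : K)) with hΘdef
  set P : Matrix (Fin n) (Fin n) (MvPolynomial (Fin n) K) := Θ.submatrix ρ τ with hPdef
  have hP : ∀ i j : Fin n, P i j = monomial (a i - Finsupp.single (τ j) 1) ((a i (τ j) : K)) := by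
    intro i j
    simp only [hPdef, Matrix.submatrix_apply, hΘdef, Matrix.of_apply, hρdef,
      pderiv_monomial, one_mul]
  have hdet : P.det = monomial c (NK.det) := by
    rw [Matrix.det_apply, Matrix.det_apply]
    have hterm : ∀ σ : Equiv.Perm (Fin n),
        Equiv.Perm.sign σ • ∏ i, P (σ i) i
          = monomial c (Equiv.Perm.sign σ • ∏ i, NK (σ i) i) := by
      intro σ
      have hprod : ∏ i, P (σ i) i =
          monomial (∑ i : Fin n, (a (σ i) - Finsupp.single (τ i) 1))
            (∏ i : Fin n, ((a (σ i) (τ i) : K))) := by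
        rw [Finset.prod_congr rfl (fun i _ => hP (σ i) i)]
        exact prod_monomial _ _ _
      by_cases hz : ∀ i : Fin n, 0 < a (σ i) (τ i)
      · have hle : ∀ i : Fin n, Finsupp.single (τ i) 1 ≤ a (σ i) :=
          fun i => Finsupp.single_le_iff.mpr (hz i)
        have hexp : ∑ i : Fin n, (a (σ i) - Finsupp.single (τ i) 1) = c := by
          have h1 : (∑ i : Fin n, (a (σ i) - Finsupp.single (τ i) 1))
              + ∑ i : Fin n, Finsupp.single (τ i) 1 = ∑ i : Fin n, a (σ i) := by
            rw [← Finset.sum_add_distrib]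
            exact Finset.sum_congr rfl fun i _ => tsub_add_cancel_of_le (hle i)
          have h2 : ∑ i : Fin n, a (σ i) = ∑ i : Fin n, a i :=
            Equiv.sum_comp σ (fun i => a i)
          have h3 : ∑ i : Fin n, Finsupp.single (τ i) 1
              = ∑ i : Fin n, Finsupp.single i (1 : ℕ) :=
            Equiv.sum_comp τ (fun i => Finsupp.single i (1 : ℕ))
          have h4 := hasum
          rw [h2, h4, h3] at h1
          exact add_right_cancel h1
        rw [hprod, hexp, smul_monomial]
        congr 2
      · push_neg at hz
        obtain ⟨i0, hi0⟩ := hz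
        have hz0 : a (σ i0) (τ i0) = 0 := by omega
        have hc1 : ∏ i : Fin n, ((a (σ i) (τ i) : K)) = 0 :=
          Finset.prod_eq_zero (Finset.mem_univ i0) (by rw [hz0]; norm_num)
        have hc2 : ∏ i : Fin n, NK (σ i) i = 0 :=
          Finset.prod_eq_zero (Finset.mem_univ i0)
            (by simp only [hNKdef, Matrix.of_apply, hz0]; norm_num)
        rw [hprod, hc1, hc2, monomial_zero, smul_zero, smul_zero, monomial_zero]
    rw [Finset.sum_congr rfl (fun σ _ => hterm σ)]
    have : ∀ σ : Equiv.Perm (Fin n),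
        (monomial c) (Equiv.Perm.sign σ • ∏ i, NK (σ i) i)
        = (monomial c : K →ₗ[K] MvPolynomial (Fin n) K)
            (Equiv.Perm.sign σ • ∏ i, NK (σ i) i) := fun _ => rfl
    rw [Finset.sum_congr rfl (fun σ _ => this σ), ← map_sum]
  -- conclusion
  have hmem : P.det ∈ minorsIdeal n Θ :=
    Ideal.subset_span ⟨ρ, τ, hinjρ, τ.injective, rfl⟩
  have hfinal : monomial c (1 : K) = C (NK.det)⁻¹ * P.det := by
    rw [hdet, C_mul_monomial, inv_mul_cancel₀ hdetNK_ne]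
  rw [hfinal]
  exact Ideal.mul_mem_left _ _ hmem

/-- Let `K` have characteristic zero, `n ≥ 1`, `d ≥ 1`,
`R = K[x_1,…,x_n]` and `m = (x_1,…,x_n)`.  The minimal monomial generators of `m^d` are
all monomials of degree `d`, so the Jacobian matrix `Θ` has rows indexed by the exponent
vectors `a` with `|a| = d` and `(a, j)` entry `∂(x^a)/∂x_j`.  Then
`I_n(Θ) = m^{n(d-1)}`. -/
theorem minors_jacobian_power_maximal {K : Type} [Field K] [CharZero K] {n : ℕ}
    (hn : 1 ≤ n) (d : ℕ) (hd : 1 ≤ d) :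
    minorsIdeal n
        (Matrix.of fun (a : {a : Fin n →₀ ℕ // (a.sum fun _ e => e) = d}) (j : Fin n) =>
          MvPolynomial.pderiv j (MvPolynomial.monomial a.1 (1 : K))) =
      (Ideal.span (Set.range (MvPolynomial.X : Fin n → MvPolynomial (Fin n) K))) ^ (n * (d - 1)) := by
  apply le_antisymm (minors_le d)
  rw [show (Ideal.span (Set.range (MvPolynomial.X : Fin n → MvPolynomial (Fin n) K))) ^ (n * (d - 1))
      = Ideal.span (Set.range (MvPolynomial.X : Fin n → MvPolynomial (Fin n) K) ^ (n * (d - 1)))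
    from Submodule.span_pow _ _]
  rw [Ideal.span_le]
  intro p hp
  obtain ⟨f, hf⟩ := Set.mem_pow.mp hp
  choose g hg using fun i => Set.mem_range.mp (f i).2
  have hp' : p = ∏ i : Fin (n * (d - 1)), X (g i) := by
    rw [← hf, List.prod_ofFn]
    exact Finset.prod_congr rfl fun i _ => (hg i).symm
  have hX : ∀ i, (X (g i) : MvPolynomial (Fin n) K)
      = monomial (Finsupp.single (g i) 1) (1 : K) := fun i => rfl
  have hp'' : p = monomial (∑ i : Fin (n * (d - 1)), Finsupp.single (g i) 1) (1 : K) := by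
    rw [hp', Finset.prod_congr rfl fun i _ => hX i, prod_monomial, Finset.prod_const_one]
  have hdeg : ((∑ i : Fin (n * (d - 1)), Finsupp.single (g i) (1 : ℕ)).sum fun _ e => e)
      = n * (d - 1) := by
    rw [deg_eq]
    have : ∀ j : Fin n, (∑ i : Fin (n * (d - 1)), Finsupp.single (g i) (1 : ℕ)) j
        = ∑ i : Fin (n * (d - 1)), Finsupp.single (g i) (1 : ℕ) j :=
      fun j => Finsupp.finset_sum_apply _ _ _
    rw [Finset.sum_congr rfl fun j _ => this j, Finset.sum_comm]
    have h1 : ∀ i : Fin (n * (d - 1)),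
        ∑ j : Fin n, Finsupp.single (g i) (1 : ℕ) j = 1 := by
      intro i
      rw [Finset.sum_congr rfl fun j _ => Finsupp.single_apply,
        Finset.sum_ite_eq Finset.univ (g i) (fun _ => 1)]
      simp
    rw [Finset.sum_congr rfl fun i _ => h1 i]
    simp
  rw [SetLike.mem_coe, hp'']
  exact monomial_mem_minors hn hd _ hdeg
end
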